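/- arXiv:2504.09719 — 11 statements merged into one kernel-verified Lean document; each statement's English description precedes it below -/
import Mathlib

section
/- Let g, h be formal power series over ℚ with the constant term of g nonzero, and let f₁ denote the constant term of h (so that f = X·h is a power series of order ≥ 1 with linear coefficient f₁, and h = f/X). Then in the ring (ℚ⟦X⟧)⟦Y⟧ one has the identity (1 + f₁·Y)⁻¹ · g · (1 - Y·(1 + f₁·Y)⁻¹·h)⁻¹ = g · (1 - Y·(h - f₁))⁻¹. Consequently, applying the transposed inverse binomial matrix B_{f₁}⁻¹ on the right of the rectified array (g, f/x) produces the Riordan array (g, (f - f₁X)/X), whose bivariate generating function is g(x)/(1 - y·(f(x) - f₁x)/x). -/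
/-! Writing `A = 1 + f₁Y`, the series `1 - Y·A⁻¹·h` factors as `A⁻¹·(A - Y·h)`, and
`A - Y·h = 1 - Y·(h - f₁)`. Inverting the product, the two factors `A⁻¹` and `A` cancel. -/

namespace Ring

theorem inverse_mul_mul_inverse_one_sub_inverse_mul {S : Type*} [CommRing S] {a : S}
    (ha : IsUnit a) (b g : S) :
    inverse a * g * inverse (1 - inverse a * b) = g * inverse (a - b) := by
  have factor : 1 - inverse a * b = inverse a * (a - b) := by
    rw [mul_sub, inverse_mul_cancel a ha]
  rw [factor, mul_inverse_rev, inverse_inverse ha]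
  calc inverse a * g * (inverse (a - b) * a)
      = inverse a * a * (g * inverse (a - b)) := by ring
    _ = g * inverse (a - b) := by rw [inverse_mul_cancel a ha, one_mul]

end Ring

namespace PowerSeries

theorem isUnit_one_add_C_mul_X {R : Type*} [CommRing R] (a : R) : IsUnit (1 + C a * X) := by
  rw [isUnit_iff_constantCoeff]
  simp

theorem inverse_one_add_C_mul_X_mul_C_mul_inverse {R : Type*} [CommRing R] (a b g : R) :
    Ring.inverse (1 + C a * X) * C g * Ring.inverse (1 - X * Ring.inverse (1 + C a * X) * C b)
      = C g * Ring.inverse (1 - X * C (b - a)) := by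
  have shift : 1 + C a * X - X * C b = 1 - X * C (b - a) := by
    rw [map_sub]
    ring
  rw [← shift, ← Ring.inverse_mul_mul_inverse_one_sub_inverse_mul (isUnit_one_add_C_mul_X a),
    mul_comm X (Ring.inverse _), mul_assoc (Ring.inverse _) X]

end PowerSeries

theorem stmt_1_general (g h : PowerSeries ℚ) :
    Ring.inverse (1 + PowerSeries.C (R := PowerSeries ℚ)
        (PowerSeries.C (R := ℚ) (PowerSeries.constantCoeff (R := ℚ) h)) * PowerSeries.X)
      * PowerSeries.C (R := PowerSeries ℚ) g
      * Ring.inverse (1 - PowerSeries.X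
          * Ring.inverse (1 + PowerSeries.C (R := PowerSeries ℚ)
              (PowerSeries.C (R := ℚ) (PowerSeries.constantCoeff (R := ℚ) h)) * PowerSeries.X)
          * PowerSeries.C (R := PowerSeries ℚ) h)
    = PowerSeries.C (R := PowerSeries ℚ) g
      * Ring.inverse (1 - PowerSeries.X
          * PowerSeries.C (R := PowerSeries ℚ)
              (h - PowerSeries.C (R := ℚ) (PowerSeries.constantCoeff (R := ℚ) h))) :=
  PowerSeries.inverse_one_add_C_mul_X_mul_C_mul_inverse _ _ _

/-- For `g, h : ℚ⟦X⟧` with nonzero constant term of `g`, writing `f₁` for the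
constant term of `h`, in `(ℚ⟦X⟧)⟦Y⟧` one has
`(1 + f₁Y)⁻¹ · g · (1 - Y·(1+f₁Y)⁻¹·h)⁻¹ = g · (1 - Y·(h - f₁))⁻¹`:
applying the transposed inverse binomial matrix `B_{f₁}⁻¹` on the right of the rectified array
`(g, f/x)` (where `f = X·h`) gives the Riordan array `(g, (f - f₁X)/X)`. -/
theorem stmt_1 (g h : PowerSeries ℚ)
    (hg : PowerSeries.constantCoeff (R := ℚ) g ≠ 0) :
    Ring.inverse (1 + PowerSeries.C (R := PowerSeries ℚ)
        (PowerSeries.C (R := ℚ) (PowerSeries.constantCoeff (R := ℚ) h)) * PowerSeries.X)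
      * PowerSeries.C (R := PowerSeries ℚ) g
      * Ring.inverse (1 - PowerSeries.X
          * Ring.inverse (1 + PowerSeries.C (R := PowerSeries ℚ)
              (PowerSeries.C (R := ℚ) (PowerSeries.constantCoeff (R := ℚ) h)) * PowerSeries.X)
          * PowerSeries.C (R := PowerSeries ℚ) h)
    = PowerSeries.C (R := PowerSeries ℚ) g
      * Ring.inverse (1 - PowerSeries.X
          * PowerSeries.C (R := PowerSeries ℚ)
              (h - PowerSeries.C (R := ℚ) (PowerSeries.constantCoeff (R := ℚ) h))) :=
  stmt_1_general g h
end

section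
/- Fix r ∈ ℚ and let T = (1 - x - x·y - r·x²·y)⁻¹ in the ring ℚ⟦x,y⟧ of formal power series in two variables, which is the bivariate generating function of the Riordan array (1/(1-x), x(1+rx)/(1-x)). Then the array of coefficients t(n,k) = [x^n y^k] T is centrally symmetric: t(n,k) = t(n, n-k) for all n ≥ 0 and all 0 ≤ k ≤ n, and moreover t(n,k) = 0 for k > n and t(n,0) = 1 for all n. -/
/-!
Since `1 - x - xy - rx²y = 1 - x(1 + y(1 + rx))`, the coefficients `t(n,k)` satisfy
`t(n+2,k+1) = t(n+1,k+1) + t(n+1,k) + r t(n,k)` with `t(n,0) = 1` and `t(0,k+1) = 0`.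
In the coordinates `u(i,j) = t(i+j,i)` this recurrence reads
`u(i+1,j+1) = u(i+1,j) + u(i,j+1) + r u(i,j)`, which is symmetric in `i` and `j`, and the
boundary values `u(0,j) = t(j,0)` and `u(i,0) = t(i,i)` are all `1`; hence `u(i,j) = u(j,i)`.
-/

open MvPowerSeries Finsupp

section Coefficients

variable {σ R : Type*} [Semiring R]

theorem MvPowerSeries.coeff_add_single_X_mul (m : σ →₀ ℕ) (s : σ) (φ : MvPowerSeries σ R) :
    coeff (m + single s 1) (X s * φ) = coeff m φ := by
  rw [X_def, add_comm, coeff_add_monomial_mul, one_mul]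

theorem MvPowerSeries.coeff_X_mul_of_apply_eq_zero {m : σ →₀ ℕ} {s : σ} (hm : m s = 0)
    (φ : MvPowerSeries σ R) : coeff m (X s * φ) = 0 := by
  rw [X_def, coeff_monomial_mul, if_neg]
  intro hle
  simpa [hm] using hle s

end Coefficients

/-- The exponent of the monomial `x ^ n * y ^ k`, with `x = X 0` and `y = X 1`. -/
noncomputable def bidegree (n k : ℕ) : Fin 2 →₀ ℕ :=
  single 0 n + single 1 k

section Bidegree

variable {R : Type*} [Semiring R]

theorem coeff_bidegree_one (n k : ℕ) :
    coeff (bidegree n k) (1 : MvPowerSeries (Fin 2) R) = if n = 0 ∧ k = 0 then 1 else 0 := by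
  have : bidegree n k = 0 ↔ n = 0 ∧ k = 0 := by
    simp [bidegree, Finsupp.ext_iff, Fin.forall_fin_two]
  simp only [coeff_one, this]

theorem coeff_bidegree_succ_X_zero_mul (n k : ℕ) (φ : MvPowerSeries (Fin 2) R) :
    coeff (bidegree (n + 1) k) (X 0 * φ) = coeff (bidegree n k) φ := by
  rw [show bidegree (n + 1) k = bidegree n k + single 0 1 by simp only [bidegree, single_add]; abel,
    coeff_add_single_X_mul]

theorem coeff_bidegree_zero_X_zero_mul (k : ℕ) (φ : MvPowerSeries (Fin 2) R) :
    coeff (bidegree 0 k) (X 0 * φ) = 0 :=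
  coeff_X_mul_of_apply_eq_zero (by simp [bidegree]) φ

theorem coeff_bidegree_succ_X_one_mul (n k : ℕ) (φ : MvPowerSeries (Fin 2) R) :
    coeff (bidegree n (k + 1)) (X 1 * φ) = coeff (bidegree n k) φ := by
  rw [show bidegree n (k + 1) = bidegree n k + single 1 1 by simp only [bidegree, single_add]; abel,
    coeff_add_single_X_mul]

theorem coeff_bidegree_zero_X_one_mul (n : ℕ) (φ : MvPowerSeries (Fin 2) R) :
    coeff (bidegree n 0) (X 1 * φ) = 0 :=
  coeff_X_mul_of_apply_eq_zero (by simp [bidegree]) φ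

end Bidegree

/-- The recurrence satisfied by the Riordan array `(1/(1-x), x(1+rx)/(1-x))`. -/
structure IsRiordanRecurrence {R : Type*} [Semiring R] (r : R) (t : ℕ → ℕ → R) : Prop where
  zero_zero : t 0 0 = 1
  zero_succ (k : ℕ) : t 0 (k + 1) = 0
  succ_zero (n : ℕ) : t (n + 1) 0 = t n 0
  one_succ (k : ℕ) : t 1 (k + 1) = t 0 (k + 1) + t 0 k
  add_two_succ (n k : ℕ) : t (n + 2) (k + 1) = t (n + 1) (k + 1) + t (n + 1) k + r * t n k

theorem IsRiordanRecurrence.of_mul_eq_one {R : Type*} [CommRing R] {r : R}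
    {T : MvPowerSeries (Fin 2) R}
    (hT : (1 - X 0 - X 0 * X 1 - C r * X 0 ^ 2 * X 1) * T = 1) :
    IsRiordanRecurrence r fun n k ↦ coeff (bidegree n k) T := by
  have hfix : T = 1 + X 0 * (T + X 1 * (T + C r * (X 0 * T))) := by
    linear_combination hT
  constructor <;> intros <;> nth_rw 1 [hfix] <;>
    simp [coeff_bidegree_one, coeff_bidegree_succ_X_zero_mul, coeff_bidegree_zero_X_zero_mul,
      coeff_bidegree_succ_X_one_mul, coeff_bidegree_zero_X_one_mul, add_assoc]

namespace IsRiordanRecurrence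

variable {R : Type*} [Semiring R] {r : R} {t : ℕ → ℕ → R}

theorem eq_zero_of_lt (h : IsRiordanRecurrence r t) : ∀ {n k : ℕ}, n < k → t n k = 0
  | _, 0, hk => absurd hk (Nat.not_lt_zero _)
  | 0, k + 1, _ => h.zero_succ k
  | 1, 1, hk => absurd hk (lt_irrefl 1)
  | 1, k + 2, _ => by rw [h.one_succ, h.zero_succ, h.zero_succ, add_zero]
  | n + 2, k + 1, hk => by
    rw [h.add_two_succ, h.eq_zero_of_lt (by omega), h.eq_zero_of_lt (by omega),
      h.eq_zero_of_lt (by omega), mul_zero, add_zero, add_zero]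

theorem apply_zero (h : IsRiordanRecurrence r t) : ∀ n : ℕ, t n 0 = 1
  | 0 => h.zero_zero
  | n + 1 => by rw [h.succ_zero, h.apply_zero n]

theorem apply_self (h : IsRiordanRecurrence r t) : ∀ n : ℕ, t n n = 1
  | 0 => h.zero_zero
  | 1 => by rw [h.one_succ, h.zero_succ, h.zero_zero, zero_add]
  | n + 2 => by
    rw [h.add_two_succ, h.apply_self (n + 1), h.eq_zero_of_lt (by omega),
      h.eq_zero_of_lt (by omega), mul_zero, zero_add, add_zero]

theorem apply_add_left_eq_apply_add_right (h : IsRiordanRecurrence r t) :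
    ∀ i j : ℕ, t (i + j) i = t (i + j) j
  | 0, j => by rw [zero_add, h.apply_zero, h.apply_self]
  | i + 1, 0 => by rw [add_zero, h.apply_zero, h.apply_self]
  | i + 1, j + 1 => by
    have hleft := h.apply_add_left_eq_apply_add_right (i + 1) j
    have hright := h.apply_add_left_eq_apply_add_right i (j + 1)
    rw [show i + 1 + j = i + j + 1 by omega] at hleft
    rw [show i + (j + 1) = i + j + 1 by omega] at hright
    rw [show i + 1 + (j + 1) = i + j + 2 by omega, h.add_two_succ, h.add_two_succ, hleft, hright,
      h.apply_add_left_eq_apply_add_right i j, add_comm (t (i + j + 1) j)]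

end IsRiordanRecurrence

/-- For `r : ℚ`, the coefficient array `t(n,k) = [x^n y^k] (1 - x - xy - rx²y)⁻¹`
(the Riordan array `(1/(1-x), x(1+rx)/(1-x))`) is centrally symmetric: `t(n,k) = t(n,n-k)` for
`0 ≤ k ≤ n`, vanishes for `k > n`, and has `t(n,0) = 1` for all `n`. -/
theorem stmt_4 (r : ℚ)
    (t : ℕ → ℕ → ℚ)
    (ht : ∀ n k : ℕ, t n k =
      MvPowerSeries.coeff (Finsupp.single (0 : Fin 2) n + Finsupp.single (1 : Fin 2) k)
        ((1 - MvPowerSeries.X (0 : Fin 2) - MvPowerSeries.X (0 : Fin 2) * MvPowerSeries.X (1 : Fin 2)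
            - MvPowerSeries.C r * MvPowerSeries.X (0 : Fin 2) ^ 2
              * MvPowerSeries.X (1 : Fin 2) : MvPowerSeries (Fin 2) ℚ)⁻¹)) :
    (∀ n k : ℕ, k ≤ n → t n k = t n (n - k)) ∧
    (∀ n k : ℕ, n < k → t n k = 0) ∧
    (∀ n : ℕ, t n 0 = 1) := by
  have hinv := MvPowerSeries.mul_inv_cancel
    (1 - X 0 - X 0 * X 1 - C r * X 0 ^ 2 * X 1 : MvPowerSeries (Fin 2) ℚ) (by simp)
  have hrec : IsRiordanRecurrence r t := by
    rw [show t = _ from funext₂ ht]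
    exact IsRiordanRecurrence.of_mul_eq_one hinv
  refine ⟨fun n k hk ↦ ?_, fun _ _ ↦ hrec.eq_zero_of_lt, hrec.apply_zero⟩
  obtain ⟨j, rfl⟩ := Nat.exists_eq_add_of_le hk
  rw [Nat.add_sub_cancel_left]
  exact hrec.apply_add_left_eq_apply_add_right k j
end

section
/- In the ring ℚ⟦x,y⟧ of formal power series in two variables, for all n, k ≥ 0 the coefficient of x^n y^k in (1 - x - y - x·y)⁻¹ equals the coefficient of X^{n+k} in (1-X)⁻¹ · (X(1+X)·(1-X)⁻¹)^k in ℚ⟦X⟧. That is, the Delannoy square with generating function 1/(1-x-y-xy) is the rectification of the Delannoy triangle, the Riordan array (1/(1-x), x(1+x)/(1-x)). -/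
/-!
Write `x = X 0`, `y = X 1` and expand `F = (1 - x - y - xy)⁻¹ = ∑ₖ yᵏ Fₖ(x)`. Since
`1 - x - y - xy = (1 - x) - y (1 + x)`, comparing coefficients of `yᵏ` in `(1 - x - y - xy) F = 1`
gives `(1 - x) F₀ = 1` and `(1 - x) Fₖ₊₁ = (1 + x) Fₖ`, hence `Fₖ = (1 + x)ᵏ / (1 - x)ᵏ⁺¹`.
The `k`-th column `g fᵏ` of the Riordan array `(1/(1-x), x(1+x)/(1-x))` is exactly `xᵏ Fₖ`.
-/

namespace MvPowerSeries

open Finsupp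

section yCoeff

variable {R : Type*} [Semiring R]

-- `F = ∑ₖ yᵏ · yCoeff k F (x)`, where `x = X 0` and `y = X 1`.
noncomputable def yCoeff (k : ℕ) : MvPowerSeries (Fin 2) R →ₗ[R] PowerSeries R where
  toFun F := PowerSeries.mk fun n ↦ coeff (single 0 n + single 1 k) F
  map_add' F G := by ext; simp
  map_smul' a F := by ext; simp

variable (F : MvPowerSeries (Fin 2) R) (k : ℕ)

@[simp]
theorem coeff_yCoeff (n : ℕ) :
    PowerSeries.coeff n (yCoeff k F) = coeff (single 0 n + single 1 k) F := by
  simp [yCoeff]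

theorem yCoeff_zero_one : yCoeff 0 (1 : MvPowerSeries (Fin 2) R) = 1 := by
  ext n
  simp [coeff_one, PowerSeries.coeff_one]

theorem yCoeff_succ_one : yCoeff (k + 1) (1 : MvPowerSeries (Fin 2) R) = 0 := by
  ext n
  simp [coeff_one]

theorem yCoeff_X_zero_mul : yCoeff k (X 0 * F) = PowerSeries.X * yCoeff k F := by
  ext (_ | n)
  · rw [PowerSeries.coeff_zero_X_mul, coeff_yCoeff, X_def, coeff_monomial_mul, if_neg]
    simp [single_le_iff]
  · rw [PowerSeries.coeff_succ_X_mul, coeff_yCoeff, coeff_yCoeff,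
      show single (0 : Fin 2) (n + 1) + single 1 k = single 0 1 + (single 0 n + single 1 k) by
        rw [single_add]; abel,
      X_def, coeff_add_monomial_mul, one_mul]

theorem yCoeff_zero_X_one_mul : yCoeff 0 (X 1 * F) = 0 := by
  ext n
  rw [coeff_yCoeff, X_def, coeff_monomial_mul, if_neg]
  · simp
  · simp [single_le_iff]

theorem yCoeff_succ_X_one_mul : yCoeff (k + 1) (X 1 * F) = yCoeff k F := by
  ext n
  rw [coeff_yCoeff, coeff_yCoeff,
    show single (0 : Fin 2) n + single 1 (k + 1) = single 1 1 + (single 0 n + single 1 k) by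
      rw [single_add]; abel,
    X_def, coeff_add_monomial_mul, one_mul]

end yCoeff

theorem yCoeff_zero_delannoy_mul {R : Type*} [CommRing R] (F : MvPowerSeries (Fin 2) R) :
    yCoeff 0 ((1 - X 0 - X 1 - X 0 * X 1) * F) = (1 - PowerSeries.X) * yCoeff 0 F := by
  rw [show (1 - X 0 - X 1 - X 0 * X 1) * F = F - X 0 * F - X 1 * (F + X 0 * F) by ring,
    map_sub, map_sub, yCoeff_X_zero_mul, yCoeff_zero_X_one_mul]
  ring

theorem yCoeff_succ_delannoy_mul {R : Type*} [CommRing R] (F : MvPowerSeries (Fin 2) R)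
    (k : ℕ) :
    yCoeff (k + 1) ((1 - X 0 - X 1 - X 0 * X 1) * F) =
      (1 - PowerSeries.X) * yCoeff (k + 1) F - (1 + PowerSeries.X) * yCoeff k F := by
  rw [show (1 - X 0 - X 1 - X 0 * X 1) * F = F - X 0 * F - X 1 * (F + X 0 * F) by ring,
    map_sub, map_sub, yCoeff_X_zero_mul, yCoeff_succ_X_one_mul, map_add, yCoeff_X_zero_mul]
  ring

theorem yCoeff_inv_delannoy {K : Type*} [Field K] (k : ℕ) :
    yCoeff k (1 - X 0 - X 1 - X 0 * X 1 : MvPowerSeries (Fin 2) K)⁻¹ =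
      (1 - PowerSeries.X)⁻¹ * ((1 + PowerSeries.X) * (1 - PowerSeries.X)⁻¹) ^ k := by
  set F := (1 - X 0 - X 1 - X 0 * X 1 : MvPowerSeries (Fin 2) K)⁻¹
  have hF : (1 - X 0 - X 1 - X 0 * X 1) * F = 1 := MvPowerSeries.mul_inv_cancel _ (by simp)
  have h1X : PowerSeries.constantCoeff (1 - PowerSeries.X : PowerSeries K) ≠ 0 := by simp
  induction k with
  | zero =>
    rw [pow_zero, mul_one, PowerSeries.eq_inv_iff_mul_eq_one h1X, mul_comm,
      ← yCoeff_zero_delannoy_mul, hF, yCoeff_zero_one]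
  | succ k ih =>
    have h := yCoeff_succ_delannoy_mul F k
    rw [hF, yCoeff_succ_one, eq_comm, sub_eq_zero] at h
    rw [pow_succ, ← mul_assoc, ← ih, ← mul_assoc, mul_comm _ (1 + _),
      PowerSeries.eq_mul_inv_iff_mul_eq h1X, mul_comm, h]

end MvPowerSeries

/-- For all `n, k ≥ 0`, the coefficient of `x^n y^k` in `(1 - x - y - xy)⁻¹`
(the Delannoy square) equals the coefficient of `X^{n+k}` in `(1-X)⁻¹·(X(1+X)(1-X)⁻¹)^k`:
the Delannoy square is the rectification of the Delannoy triangle, the Riordan array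
`(1/(1-x), x(1+x)/(1-x))`. -/
theorem stmt_6 (n k : ℕ) :
    MvPowerSeries.coeff (R := ℚ) (Finsupp.single (0 : Fin 2) n + Finsupp.single (1 : Fin 2) k)
      ((1 - MvPowerSeries.X (0 : Fin 2) - MvPowerSeries.X (1 : Fin 2)
        - MvPowerSeries.X (0 : Fin 2) * MvPowerSeries.X (1 : Fin 2) :
          MvPowerSeries (Fin 2) ℚ)⁻¹)
    = PowerSeries.coeff (R := ℚ) (n + k)
        ((1 - PowerSeries.X : PowerSeries ℚ)⁻¹
          * (PowerSeries.X * (1 + PowerSeries.X) * (1 - PowerSeries.X)⁻¹) ^ k) := by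
  rw [← MvPowerSeries.coeff_yCoeff, MvPowerSeries.yCoeff_inv_delannoy,
    ← PowerSeries.coeff_X_pow_mul _ k n, mul_assoc PowerSeries.X, mul_pow PowerSeries.X,
    mul_left_comm]
end

section
/- Fix r, s ∈ ℚ and let g be a formal power series over ℚ satisfying g = 1 + r·X·g + s·X·g². Then in the polynomial ring (ℚ⟦X⟧)[Y] one has the identity g·(Y - r·X·Y - X·Y² - s) = (Y - s·g)·(1 - X·Y·g). Equivalently, the bivariate generating function of the Bell matrix (g, Xg) factors as g/(1-yxg) = (1 - s·g/y)·1/(1 - rx - xy - s/y), exhibiting that (g, Xg) counts lattice paths from (0,0) to (n,k) with r colored (1,0) steps, a (1,1) step, and s colored (0,-1) steps. -/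
open Polynomial in
theorem Polynomial.C_mul_eq_mul_of_quadratic_eq {A : Type*} [CommRing A] {r s x g : A}
    (hg : g = 1 + r * x * g + s * x * g ^ 2) :
    C g * (X - C (r * x) * X - C x * X ^ 2 - C s) = (X - C (s * g)) * (1 - C x * X * C g) := by
  have hCg : C g = 1 + C r * C x * C g + C s * C x * C g ^ 2 := by
    simpa only [map_add, map_mul, map_one, map_pow] using congrArg C hg
  simp only [map_mul]
  linear_combination X * hCg

/-- For `r, s : ℚ` and `g : ℚ⟦X⟧` with `g = 1 + rXg + sXg²`, in `(ℚ⟦X⟧)[Y]` one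
has `g·(Y - rXY - XY² - s) = (Y - sg)·(1 - XYg)`: the generating function of the Bell matrix
`(g, Xg)` factors as `g/(1-yxg) = (1 - sg/y)·1/(1 - rx - xy - s/y)`, exhibiting lattice paths
with `r` colored `(1,0)` steps, a `(1,1)` step and `s` colored `(0,-1)` steps. -/
theorem stmt_8 (r s : ℚ) (g : PowerSeries ℚ)
    (hg : g = 1 + PowerSeries.C r * PowerSeries.X * g
      + PowerSeries.C s * PowerSeries.X * g ^ 2) :
    Polynomial.C g * (Polynomial.X
        - Polynomial.C (PowerSeries.C r * PowerSeries.X) * Polynomial.X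
        - Polynomial.C (PowerSeries.X : PowerSeries ℚ) * Polynomial.X ^ 2
        - Polynomial.C (PowerSeries.C s))
    = (Polynomial.X - Polynomial.C (PowerSeries.C s * g))
        * (1 - Polynomial.C (PowerSeries.X : PowerSeries ℚ) * Polynomial.X * Polynomial.C g) :=
  Polynomial.C_mul_eq_mul_of_quadratic_eq hg
end

section
/- Let M be the formal power series over ℚ satisfying M = 1 + X·M + X²·M² (the generating function of the Motzkin numbers). Then in the polynomial ring (ℚ⟦X⟧)[Y] one has the identity M·(Y - X·Y - X·Y² - X) = (Y - X·M)·(1 - X·Y·M). Equivalently, the generating function of the Motzkin matrix (M, XM) factors as M/(1 - yxM) = (1 - xM/y)·1/(1 - x - xy - x/y), exhibiting the Motzkin step set {(1,1),(1,0),(1,-1)}. -/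
/-- For the Motzkin generating function `M = 1 + XM + X²M²`, in `(ℚ⟦X⟧)[Y]` one
has `M·(Y - XY - XY² - X) = (Y - XM)·(1 - XYM)`: the generating function of the Motzkin matrix
`(M, XM)` factors as `M/(1-yxM) = (1 - xM/y)·1/(1 - x - xy - x/y)`, exhibiting the Motzkin
step set `{(1,1),(1,0),(1,-1)}`. -/
theorem stmt_9 (M : PowerSeries ℚ)
    (hM : M = 1 + PowerSeries.X * M + PowerSeries.X ^ 2 * M ^ 2) :
    Polynomial.C M * (Polynomial.X
        - Polynomial.C (PowerSeries.X : PowerSeries ℚ) * Polynomial.X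
        - Polynomial.C (PowerSeries.X : PowerSeries ℚ) * Polynomial.X ^ 2
        - Polynomial.C (PowerSeries.X : PowerSeries ℚ))
    = (Polynomial.X - Polynomial.C (PowerSeries.X * M))
        * (1 - Polynomial.C (PowerSeries.X : PowerSeries ℚ) * Polynomial.X * Polynomial.C M) := by
  have h := congrArg (Polynomial.C : PowerSeries ℚ →+* Polynomial (PowerSeries ℚ)) hM
  simp only [map_add, map_mul, map_pow, map_one] at h
  simp only [map_mul]
  linear_combination Polynomial.X * h
end

section
/- Fix r, s ∈ ℚ. Let g ∈ ℚ⟦X⟧ satisfy g = 1 + r·X·g + s·X·g², and let m ∈ ℚ⟦X⟧ satisfy m = 1 + (r+2s)·X·m + s(r+s)·X²·m². Then g·(1 - (r+s)·X - s(r+s)·X²·m) = 1; that is, g = 1/(1 - (r+s)x - s(r+s)x²·m). Hence the same series g is simultaneously given by the Thron continued fraction enumerating (r,s)-Schroeder paths and by the Jacobi continued fraction enumerating generalized Motzkin paths with r+s level steps at level 0, r+2s level steps at higher levels, and s(r+s) types of down steps. -/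
/-!
The Schröder equation `g = 1 + rXg + sXg²` has at most one power series solution: the difference
of two solutions `g, u` satisfies `(g - u)(1 - rX - sX(g + u)) = 0`, and the second factor has
constant coefficient `1`, so it is a unit. Multiplying the Motzkin equation for `m` by `(r+s)X`
shows that `1 + (r+s)Xm` solves the Schröder equation, so it equals `g`; the claimed identity is
then the Motzkin equation multiplied by `(r+s)X` once more.
-/

open PowerSeries

namespace PowerSeries

variable {R : Type*} [CommRing R]

theorem eq_of_schroeder_eq {r s : R} {g u : R⟦X⟧}
    (hg : g = 1 + C r * X * g + C s * X * g ^ 2)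
    (hu : u = 1 + C r * X * u + C s * X * u ^ 2) : g = u := by
  have hfactor : (g - u) * (1 - C r * X - C s * X * (g + u)) = 0 := by
    linear_combination hg - hu
  have hunit : IsUnit (1 - C r * X - C s * X * (g + u)) := by
    simp [isUnit_iff_constantCoeff]
  exact sub_eq_zero.mp (hunit.mul_left_eq_zero.mp hfactor)

theorem schroeder_eq_of_motzkin_eq {r s : R} {m : R⟦X⟧}
    (hm : m = 1 + C (r + 2 * s) * X * m + C (s * (r + s)) * X ^ 2 * m ^ 2) :
    1 + C (r + s) * X * m
      = 1 + C r * X * (1 + C (r + s) * X * m) + C s * X * (1 + C (r + s) * X * m) ^ 2 := by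
  simp only [map_add, map_mul, map_ofNat] at hm ⊢
  linear_combination (C r + C s) * X * hm

end PowerSeries

/-- For `r, s : ℚ`, let `g = 1 + rXg + sXg²` ((r,s)-Schroeder paths, Thron
continued fraction) and `m = 1 + (r+2s)Xm + s(r+s)X²m²` (generalized Motzkin paths, Jacobi
continued fraction). Then `g·(1 - (r+s)X - s(r+s)X²m) = 1`, i.e.
`g = 1/(1 - (r+s)x - s(r+s)x²m)`. -/
theorem stmt_11 (r s : ℚ) (g m : PowerSeries ℚ)
    (hg : g = 1 + PowerSeries.C r * PowerSeries.X * g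
      + PowerSeries.C s * PowerSeries.X * g ^ 2)
    (hm : m = 1 + PowerSeries.C (r + 2 * s) * PowerSeries.X * m
      + PowerSeries.C (s * (r + s)) * PowerSeries.X ^ 2 * m ^ 2) :
    g * (1 - PowerSeries.C (r + s) * PowerSeries.X
      - PowerSeries.C (s * (r + s)) * PowerSeries.X ^ 2 * m) = 1 := by
  rw [eq_of_schroeder_eq hg (schroeder_eq_of_motzkin_eq hm)]
  simp only [map_add, map_mul, map_ofNat] at hm ⊢
  linear_combination (C r + C s) * X * hm
end

section
/- Fix α, β, γ ∈ ℚ and let f ∈ ℚ⟦X⟧ be a power series with zero constant term satisfying f = X + α·X²·f + β·X²·f² + γ·f². Let c ∈ ℚ⟦X⟧ be the unique power series with c = 1 + X·c². Then f = X·(1 - αX²)⁻¹ · (c ∘ (X·(γ + βX²)·(1 - αX²)⁻²)), where ∘ denotes substitution (well-defined since X(γ+βX²)/(1-αX²)² has zero constant term). Equivalently, f/X = (1/(1-αx²))·c( x(γ+βx²)/(1-αx²)² ). -/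
/-- Composition `u ∘ f` of formal power series (substitution of `f` into `u`), valid
when `f` has zero constant term: the coefficient of `X^n` is `∑_{k ≤ n} u_k [X^n] f^k`. -/
noncomputable def composePS (u f : PowerSeries ℚ) : PowerSeries ℚ :=
  PowerSeries.mk fun n =>
    ∑ k ∈ Finset.range (n + 1), PowerSeries.coeff k u * PowerSeries.coeff n (f ^ k)

/-!
Substituting `w = X(γ + βX²)/(1 - αX²)²` into `c = 1 + Xc²` gives `g = 1 + w g²`, and then
`X g/(1 - αX²)` satisfies `f = X + αX²f + βX²f² + γf²` by a ring identity. Solutions with zero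
constant term are unique, because the difference of two of them is annihilated by a power series
with constant term `1`. The coefficientwise composition `composePS` is Mathlib's
`PowerSeries.subst`, so it is a ring homomorphism.
-/

open PowerSeries

section CommRing

variable {R : Type*} [CommRing R]

theorem PowerSeries.coeff_pow_eq_zero_of_lt {f : R⟦X⟧} (hf : constantCoeff f = 0) {n k : ℕ}
    (h : n < k) : coeff n (f ^ k) = 0 :=
  X_pow_dvd_iff.mp (pow_dvd_pow_of_dvd (X_dvd_iff.mpr hf) k) n h

theorem PowerSeries.subst_eq_one_add_mul_sq {c w : R⟦X⟧} (hw : constantCoeff w = 0)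
    (hc : c = 1 + X * c ^ 2) : c.subst w = 1 + w * c.subst w ^ 2 := by
  have hsubst := HasSubst.of_constantCoeff_zero' hw
  simpa [← coe_substAlgHom hsubst, substAlgHom_X] using congrArg (substAlgHom hsubst) hc

variable (α β γ : R)

theorem eq_of_lattice_path_equation {p q : R⟦X⟧} (hp0 : constantCoeff p = 0)
    (hq0 : constantCoeff q = 0)
    (hp : p = X + C α * X ^ 2 * p + C β * X ^ 2 * p ^ 2 + C γ * p ^ 2)
    (hq : q = X + C α * X ^ 2 * q + C β * X ^ 2 * q ^ 2 + C γ * q ^ 2) : p = q := by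
  set M : R⟦X⟧ := C α * X ^ 2 + (C β * X ^ 2 + C γ) * (p + q)
  have hfactor : (1 - M) * (p - q) = 0 := by linear_combination hp - hq
  have hunit : IsUnit (1 - M) := isUnit_iff_constantCoeff.mpr (by simp [M, hp0, hq0])
  exact sub_eq_zero.mp (hunit.mul_right_eq_zero.mp hfactor)

theorem lattice_path_equation_of_catalan {A g : R⟦X⟧} (hA : (1 - C α * X ^ 2) * A = 1)
    (hg : g = 1 + X * (C γ + C β * X ^ 2) * A ^ 2 * g ^ 2) :
    X * A * g = X + C α * X ^ 2 * (X * A * g) + C β * X ^ 2 * (X * A * g) ^ 2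
      + C γ * (X * A * g) ^ 2 := by
  linear_combination (X * g) * hA + X * hg

end CommRing

theorem composePS_eq_subst {f : ℚ⟦X⟧} (hf : constantCoeff f = 0) (u : ℚ⟦X⟧) :
    composePS u f = u.subst f := by
  ext n
  rw [composePS, coeff_mk, coeff_subst' (HasSubst.of_constantCoeff_zero' hf)]
  refine (finsum_eq_finsetSum_of_support_subset _ fun k hk => ?_).symm
  by_contra hkn
  simp only [Finset.coe_range, Set.mem_Iio, not_lt] at hkn
  exact hk (by simp [coeff_pow_eq_zero_of_lt hf (Nat.lt_of_succ_le hkn)])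

/-- Fix `α, β, γ : ℚ` and let `f : ℚ⟦X⟧` have zero constant term and satisfy
`f = X + αX²f + βX²f² + γf²`. With `c` the Catalan series (`c = 1 + Xc²`), one has
`f = X·(1-αX²)⁻¹ · (c ∘ (X(γ+βX²)(1-αX²)⁻²))`, i.e.
`f/x = (1/(1-αx²))·c(x(γ+βx²)/(1-αx²)²)`. -/
theorem stmt_12 (α β γ : ℚ) (f c : PowerSeries ℚ)
    (hf0 : PowerSeries.constantCoeff f = 0)
    (hf : f = PowerSeries.X + PowerSeries.C α * PowerSeries.X ^ 2 * f
      + PowerSeries.C β * PowerSeries.X ^ 2 * f ^ 2 + PowerSeries.C γ * f ^ 2)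
    (hc : c = 1 + PowerSeries.X * c ^ 2) :
    f = PowerSeries.X * (1 - PowerSeries.C α * PowerSeries.X ^ 2)⁻¹
      * composePS c
          (PowerSeries.X * (PowerSeries.C γ + PowerSeries.C β * PowerSeries.X ^ 2)
            * ((1 - PowerSeries.C α * PowerSeries.X ^ 2)⁻¹) ^ 2) := by
  set A : ℚ⟦X⟧ := (1 - C α * X ^ 2)⁻¹
  have hA : (1 - C α * X ^ 2) * A = 1 := PowerSeries.mul_inv_cancel _ (by simp)
  set w : ℚ⟦X⟧ := X * (C γ + C β * X ^ 2) * A ^ 2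
  have hw0 : constantCoeff w = 0 := by simp [w]
  rw [composePS_eq_subst hw0]
  refine eq_of_lattice_path_equation α β γ hf0 (by simp) hf ?_
  exact lattice_path_equation_of_catalan α β γ hA (subst_eq_one_add_mul_sq hw0 hc)
end

section
/- Let G ∈ ℚ⟦x,y⟧ be a formal power series in two variables satisfying G = 1 + x·y·G + x·G². Then for all n ≥ 0 and 0 ≤ k ≤ n, (n - k + 1) · [x^n y^k] G = binom(2n-k, k) · binom(2n-2k, n-k), and [x^n y^k] G = 0 for k > n. That is, the matrix with generating function (1 - xy - √(1 - 4x - 2xy + x²y²))/(2x) has general term binom(2n-k,k)·binom(2n-2k,n-k)/(n-k+1). -/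
/-!
The coefficient array `f n k = [x^n y^k] G` is determined, by strong induction on `n`, by the
coefficientwise form of `G = 1 + xyG + xG²`, so it suffices to check that
`T n k = C_{n-k} * binom(2n-k, k)` satisfies that recursion. Writing `n = m + k`, the substitution
`(a, c) ↦ (a - c, c)` turns the self-convolution of `T` into
`∑_{p+q=m} C_p C_q ∑_{c+d=k} binom(2p+c, 2p) binom(2q+d, 2q)`. The inner sum is
`binom(2m+1+k, 2m+1)`, read off from `(1-t)^{-(2p+1)} (1-t)^{-(2q+1)} = (1-t)^{-(2m+2)}`, and
the outer one is Segner's recurrence for `C_{m+1}`; Pascal's rule then closes the recursion.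
Finally `(m+1) C_m = binom(2m, m)` gives the stated form.
-/

open Finset MvPowerSeries

namespace Nat

theorem sum_antidiagonal_add_choose_mul_add_choose (r s k : ℕ) :
    ∑ ij ∈ antidiagonal k, (r + ij.1).choose r * (s + ij.2).choose s
      = (r + s + 1 + k).choose (r + s + 1) := by
  have h := congrArg (fun f => PowerSeries.coeff k (Units.val f))
    (PowerSeries.invOneSubPow_add ℤ (r + 1) (s + 1))
  simp only [show r + 1 + (s + 1) = r + s + 1 + 1 by ring, Units.val_mul,
    PowerSeries.invOneSubPow_val_succ_eq_mk_add_choose, PowerSeries.coeff_mul,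
    PowerSeries.coeff_mk] at h
  exact_mod_cast h.symm

end Nat

namespace MvPowerSeries

variable {σ R : Type*} [CommSemiring R]

theorem coeff_single_add_X_mul (s : σ) (d : σ →₀ ℕ) (φ : MvPowerSeries σ R) :
    coeff (Finsupp.single s 1 + d) (X s * φ) = coeff d φ := by
  rw [X_def, coeff_add_monomial_mul, one_mul]

theorem coeff_X_mul_of_apply_eq_zero_s13 {s : σ} {d : σ →₀ ℕ} (hd : d s = 0)
    (φ : MvPowerSeries σ R) : coeff d (X s * φ) = 0 := by
  rw [X_def, coeff_monomial_mul, if_neg]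
  intro h
  simpa [hd] using h s

end MvPowerSeries

noncomputable def bideg (n k : ℕ) : Fin 2 →₀ ℕ := Finsupp.single 0 n + Finsupp.single 1 k

@[simp] theorem bideg_apply_zero (n k : ℕ) : bideg n k 0 = n := by simp [bideg]
@[simp] theorem bideg_apply_one (n k : ℕ) : bideg n k 1 = k := by simp [bideg]

theorem bideg_eq_iff {d : Fin 2 →₀ ℕ} {n k : ℕ} :
    bideg n k = d ↔ n = d 0 ∧ k = d 1 := by
  refine ⟨fun h => h ▸ by simp, fun ⟨hn, hk⟩ => Finsupp.ext fun i => ?_⟩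
  fin_cases i <;> simp [hn, hk]

theorem bideg_apply_zero_apply_one (d : Fin 2 →₀ ℕ) : bideg (d 0) (d 1) = d :=
  bideg_eq_iff.mpr ⟨rfl, rfl⟩

theorem bideg_eq_zero_iff {n k : ℕ} : bideg n k = 0 ↔ n = 0 ∧ k = 0 := by
  simp [bideg_eq_iff]

theorem bideg_add_bideg (a b c d : ℕ) : bideg a c + bideg b d = bideg (a + b) (c + d) := by
  simp only [bideg, Finsupp.single_add]
  abel

theorem single_zero_add_bideg (n k : ℕ) : Finsupp.single 0 1 + bideg n k = bideg (n + 1) k :=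
  (bideg_eq_iff.mpr ⟨by simp [add_comm], by simp⟩).symm

theorem single_one_add_bideg (n k : ℕ) : Finsupp.single 1 1 + bideg n k = bideg n (k + 1) :=
  (bideg_eq_iff.mpr ⟨by simp, by simp [add_comm]⟩).symm

theorem sum_antidiagonal_bideg {M : Type*} [AddCommMonoid M] (n k : ℕ)
    (f : (Fin 2 →₀ ℕ) → (Fin 2 →₀ ℕ) → M) :
    ∑ p ∈ antidiagonal (bideg n k), f p.1 p.2
      = ∑ ab ∈ antidiagonal n, ∑ cd ∈ antidiagonal k,
          f (bideg ab.1 cd.1) (bideg ab.2 cd.2) := by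
  rw [← sum_product']
  refine sum_nbij' (fun p => ((p.1 0, p.2 0), (p.1 1, p.2 1)))
    (fun x => (bideg x.1.1 x.2.1, bideg x.1.2 x.2.2)) ?_ ?_ ?_ ?_ ?_
  · rintro ⟨u, v⟩ hp
    have h := HasAntidiagonal.mem_antidiagonal.mp hp
    simp only [mem_product, HasAntidiagonal.mem_antidiagonal]
    constructor
    · simpa using congr($h 0)
    · simpa using congr($h 1)
  · rintro ⟨⟨a, b⟩, c, d⟩ h
    simp only [mem_product, HasAntidiagonal.mem_antidiagonal] at h
    simp only [HasAntidiagonal.mem_antidiagonal, bideg_add_bideg, h]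
  · rintro ⟨u, v⟩ -
    simp only [Prod.mk.injEq, bideg_eq_iff, and_self]
  · rintro ⟨⟨a, b⟩, c, d⟩ -
    simp
  · rintro ⟨u, v⟩ -
    simp only [bideg_apply_zero_apply_one]

theorem coeff_bideg_mul {R : Type*} [CommSemiring R] (φ ψ : MvPowerSeries (Fin 2) R) (n k : ℕ) :
    coeff (bideg n k) (φ * ψ) = ∑ ab ∈ antidiagonal n, ∑ cd ∈ antidiagonal k,
      coeff (bideg ab.1 cd.1) φ * coeff (bideg ab.2 cd.2) ψ := by
  rw [coeff_mul]
  exact sum_antidiagonal_bideg n k fun u v => coeff u φ * coeff v ψ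

def selfConv {R : Type*} [Semiring R] (f : ℕ → ℕ → R) (n k : ℕ) : R :=
  ∑ ab ∈ antidiagonal n, ∑ cd ∈ antidiagonal k, f ab.1 cd.1 * f ab.2 cd.2

def schroederTriangle (n k : ℕ) : ℕ :=
  if k ≤ n then catalan (n - k) * (2 * n - k).choose k else 0

namespace schroederTriangle

theorem add_self (m k : ℕ) :
    schroederTriangle (m + k) k = catalan m * (2 * m + k).choose (2 * m) := by
  rw [schroederTriangle, if_pos (Nat.le_add_left k m), Nat.add_sub_cancel,
    show 2 * (m + k) - k = 2 * m + k by omega, Nat.choose_symm_add]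

theorem self (n : ℕ) : schroederTriangle n n = 1 := by
  simpa using add_self 0 n

theorem of_lt {n k : ℕ} (h : n < k) : schroederTriangle n k = 0 :=
  if_neg (Nat.not_le.mpr h)

theorem sub_add_one_mul {n k : ℕ} (h : k ≤ n) :
    (n - k + 1) * schroederTriangle n k
      = (2 * n - k).choose k * (2 * n - 2 * k).choose (n - k) := by
  rw [schroederTriangle, if_pos h, ← mul_assoc, succ_mul_catalan_eq_centralBinom,
    Nat.centralBinom_eq_two_mul_choose, Nat.mul_sub, mul_comm]

theorem selfConv_add_self (m k : ℕ) :
    selfConv schroederTriangle (m + k) k = catalan (m + 1) * (2 * m + 1 + k).choose (2 * m + 1) :=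
  calc selfConv schroederTriangle (m + k) k
      = ∑ x ∈ antidiagonal (m + k) ×ˢ antidiagonal k,
          schroederTriangle x.1.1 x.2.1 * schroederTriangle x.1.2 x.2.2 := by
        rw [selfConv, ← sum_product']
    _ = ∑ y ∈ antidiagonal m ×ˢ antidiagonal k, catalan y.1.1 * catalan y.1.2 *
          ((2 * y.1.1 + y.2.1).choose (2 * y.1.1) * (2 * y.1.2 + y.2.2).choose (2 * y.1.2)) := by
        symm
        refine sum_of_injOn (fun y => ((y.1.1 + y.2.1, y.1.2 + y.2.2), y.2)) ?_ ?_ ?_ ?_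
        · rintro ⟨⟨p, q⟩, c, d⟩ - ⟨⟨p', q'⟩, c', d'⟩ - h
          simp only [Prod.mk.injEq] at h ⊢
          omega
        · rintro ⟨⟨p, q⟩, c, d⟩ h
          simp only [coe_product, Set.mem_prod, mem_coe, HasAntidiagonal.mem_antidiagonal] at h ⊢
          omega
        · rintro ⟨⟨a, b⟩, c, d⟩ hx hne
          simp only [mem_product, HasAntidiagonal.mem_antidiagonal] at hx
          rcases Nat.lt_or_ge a c with hac | hca
          · rw [of_lt hac, zero_mul]
          rcases Nat.lt_or_ge b d with hbd | hdb
          · rw [of_lt hbd, mul_zero]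
          refine absurd ⟨((a - c, b - d), c, d), ?_, ?_⟩ hne
          · simp only [coe_product, Set.mem_prod, mem_coe, HasAntidiagonal.mem_antidiagonal]
            omega
          · simp only [Nat.sub_add_cancel hca, Nat.sub_add_cancel hdb]
        · rintro ⟨⟨p, q⟩, c, d⟩ -
          simp only [add_self]
          ring
    _ = ∑ pq ∈ antidiagonal m,
          catalan pq.1 * catalan pq.2 * (2 * m + 1 + k).choose (2 * m + 1) := by
        rw [sum_product]
        refine sum_congr rfl fun pq hpq => ?_
        dsimp only
        rw [← mul_sum, Nat.sum_antidiagonal_add_choose_mul_add_choose,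
          ← HasAntidiagonal.mem_antidiagonal.mp hpq, mul_add]
    _ = catalan (m + 1) * (2 * m + 1 + k).choose (2 * m + 1) := by
        rw [← sum_mul, catalan_succ']

theorem selfConv_of_lt {n k : ℕ} (h : n < k) : selfConv schroederTriangle n k = 0 := by
  refine sum_eq_zero fun ab hab => sum_eq_zero fun cd hcd => ?_
  rw [HasAntidiagonal.mem_antidiagonal] at hab hcd
  rcases Nat.lt_or_ge ab.1 cd.1 with h1 | h1
  · rw [of_lt h1, zero_mul]
  · rw [of_lt (show ab.2 < cd.2 by omega), mul_zero]

end schroederTriangle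

/-- The coefficientwise form of `G = 1 + xyG + xG²` for `f n k = [x^n y^k] G`; `selfConv f` is the
coefficient array of `G²`. -/
structure IsSchroederArray {R : Type*} [Semiring R] (f : ℕ → ℕ → R) : Prop where
  zero_left : ∀ k, f 0 k = if k = 0 then 1 else 0
  succ_zero : ∀ n, f (n + 1) 0 = selfConv f n 0
  succ_succ : ∀ n k, f (n + 1) (k + 1) = f n k + selfConv f n (k + 1)

namespace IsSchroederArray

variable {R : Type*} [Semiring R]

theorem unique {f g : ℕ → ℕ → R} (hf : IsSchroederArray f) (hg : IsSchroederArray g) :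
    f = g := by
  funext n
  induction n using Nat.strong_induction_on with
  | _ n ih =>
    have hconv : ∀ m k, m < n → selfConv f m k = selfConv g m k := fun m k hm => by
      refine sum_congr rfl fun ab hab => sum_congr rfl fun cd _ => ?_
      have hab := HasAntidiagonal.mem_antidiagonal.mp hab
      rw [ih ab.1 (by omega), ih ab.2 (by omega)]
    funext k
    rcases n with _ | n
    · rw [hf.zero_left, hg.zero_left]
    rcases k with _ | k
    · rw [hf.succ_zero, hg.succ_zero, hconv n 0 n.lt_succ_self]
    · rw [hf.succ_succ, hg.succ_succ, hconv n (k + 1) n.lt_succ_self, ih n n.lt_succ_self]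

theorem map {S : Type*} [Semiring S] {f : ℕ → ℕ → R} (hf : IsSchroederArray f)
    (φ : R →+* S) :
    IsSchroederArray fun n k => φ (f n k) := by
  have hconv : ∀ n k, φ (selfConv f n k) = selfConv (fun n k => φ (f n k)) n k := fun n k => by
    simp only [selfConv, map_sum, map_mul]
  refine ⟨fun k => ?_, fun n => ?_, fun n k => ?_⟩
  · rw [hf.zero_left]
    split_ifs <;> simp
  · rw [hf.succ_zero, hconv]
  · rw [hf.succ_succ, map_add, hconv]

end IsSchroederArray

theorem isSchroederArray_schroederTriangle : IsSchroederArray schroederTriangle := by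
  refine ⟨fun k => ?_, fun n => ?_, fun n k => ?_⟩
  · rcases k with _ | k
    · simp [schroederTriangle]
    · simp [schroederTriangle.of_lt k.succ_pos]
  · simpa [schroederTriangle] using (schroederTriangle.selfConv_add_self n 0).symm
  · rcases Nat.lt_or_ge n k with hnk | hkn
    · rw [schroederTriangle.of_lt hnk, schroederTriangle.of_lt (by omega),
        schroederTriangle.selfConv_of_lt (by omega)]
    obtain ⟨m, rfl⟩ := Nat.exists_eq_add_of_le' hkn
    rcases m with _ | m
    · rw [zero_add, schroederTriangle.self, schroederTriangle.self,
        schroederTriangle.selfConv_of_lt k.lt_succ_self]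
    · rw [show m + 1 + k + 1 = m + 1 + (k + 1) by ring, schroederTriangle.add_self,
        schroederTriangle.add_self, show m + 1 + k = m + (k + 1) by ring,
        schroederTriangle.selfConv_add_self, show 2 * (m + 1) = 2 * m + 1 + 1 by ring,
        show 2 * m + 1 + 1 + (k + 1) = (2 * m + 1 + 1 + k) + 1 by ring, Nat.choose_succ_succ',
        show 2 * m + 1 + 1 + k = 2 * m + 1 + (k + 1) by ring]
      ring

theorem isSchroederArray_coeff {R : Type*} [CommSemiring R] {G : MvPowerSeries (Fin 2) R}
    (hG : G = 1 + X 0 * X 1 * G + X 0 * G ^ 2) :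
    IsSchroederArray fun n k => coeff (bideg n k) G := by
  have hsq : ∀ n k, coeff (bideg n k) (G ^ 2) = selfConv (fun n k => coeff (bideg n k) G) n k :=
    fun n k => by rw [sq, coeff_bideg_mul]; rfl
  refine ⟨fun k => ?_, fun n => ?_, fun n k => ?_⟩
  all_goals
    conv_lhs => rw [hG]
    simp only [map_add, mul_assoc]
  · rw [coeff_X_mul_of_apply_eq_zero_s13 (by simp), coeff_X_mul_of_apply_eq_zero_s13 (by simp), coeff_one]
    simp [bideg_eq_zero_iff]
  · rw [← single_zero_add_bideg, coeff_single_add_X_mul, coeff_single_add_X_mul,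
      coeff_X_mul_of_apply_eq_zero_s13 (by simp), coeff_one, hsq]
    simp [bideg_eq_zero_iff]
  · rw [← single_zero_add_bideg, coeff_single_add_X_mul, coeff_single_add_X_mul,
      ← single_one_add_bideg, coeff_single_add_X_mul, single_one_add_bideg, coeff_one, hsq]
    simp [bideg_eq_zero_iff]

/-- Let `G ∈ ℚ⟦x,y⟧` satisfy `G = 1 + xyG + xG²` (OEIS A060693). Then for
`0 ≤ k ≤ n`, `(n-k+1)·[x^n y^k]G = C(2n-k,k)·C(2n-2k,n-k)`, and `[x^n y^k]G = 0` for `k > n`. -/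
theorem stmt_13 (G : MvPowerSeries (Fin 2) ℚ)
    (hG : G = 1 + MvPowerSeries.X (0 : Fin 2) * MvPowerSeries.X (1 : Fin 2) * G
      + MvPowerSeries.X (0 : Fin 2) * G ^ 2) :
    (∀ n k : ℕ, k ≤ n →
      ((n - k + 1 : ℕ) : ℚ) * MvPowerSeries.coeff
          (Finsupp.single (0 : Fin 2) n + Finsupp.single (1 : Fin 2) k) G
        = ((2 * n - k).choose k : ℚ) * ((2 * n - 2 * k).choose (n - k) : ℚ)) ∧
    (∀ n k : ℕ, n < k →
      MvPowerSeries.coeff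
        (Finsupp.single (0 : Fin 2) n + Finsupp.single (1 : Fin 2) k) G = 0) := by
  have hcoeff : ∀ n k, coeff (bideg n k) G = schroederTriangle n k := fun n k =>
    congrFun (congrFun ((isSchroederArray_coeff hG).unique
      (isSchroederArray_schroederTriangle.map (Nat.castRingHom ℚ))) n) k
  refine ⟨fun n k hkn => ?_, fun n k hnk => ?_⟩
  · rw [← bideg, hcoeff]
    exact_mod_cast schroederTriangle.sub_add_one_mul hkn
  · rw [← bideg, hcoeff, schroederTriangle.of_lt hnk, Nat.cast_zero]
end

section
/- Let t ∈ ℚ⟦X⟧ be the formal power series satisfying t = 1 + X·t³ (the generating function of the ternary numbers). Then for every n ≥ 0, (2n + 1) · [X^n] t = binom(3n, n); that is, the coefficients of t are the ternary numbers (1/(2n+1))·binom(3n,n). These numbers count lattice paths from (0,0) to (n,0) with step set {(1,1),(-1,-2)}. -/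
/-!
Differentiating `t = 1 + X t³` gives `t' (1 - 3X t²) = t³`, and once more an expression for
`t''`. Since `1 - 3X t²` is a unit, these eliminate to the linear ODE
`(4X - 27X²) t'' + (6 - 54X) t' - 6t = 0`, whose coefficient form is the first-order recurrence
`2(n+1)(2n+3) aₙ₊₁ = 3(3n+1)(3n+2) aₙ`. The numbers `C(3n,n)/(2n+1)` satisfy the same recurrence
and start at `1`.
-/

open PowerSeries

theorem Nat.mul_choose_three_mul_succ (n : ℕ) :
    2 * (n + 1) * (2 * n + 1) * (3 * (n + 1)).choose (n + 1)
      = 3 * (3 * n + 1) * (3 * n + 2) * (3 * n).choose n := by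
  have e1 := Nat.add_one_mul_choose_eq (3 * n + 2) n
  have e2 := Nat.choose_mul_succ_eq (3 * n + 1) n
  have e3 := Nat.choose_mul_succ_eq (3 * n) n
  rw [show 3 * n + 1 + 1 - n = 2 * n + 2 by omega] at e2
  rw [show 3 * n + 1 - n = 2 * n + 1 by omega] at e3
  rw [show 3 * (n + 1) = 3 * n + 2 + 1 by ring]
  zify at *
  linear_combination (-2 * (2 * n + 1) : ℤ) * e1 - 3 * (2 * n + 1) * e2 - 3 * (3 * n + 2) * e3

namespace PowerSeries

variable {R : Type*}

theorem coeff_X_mul_derivative [CommSemiring R] (f : R⟦X⟧) (n : ℕ) :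
    coeff n (X * d⁄dX R f) = n * coeff n f := by
  cases n with
  | zero => simp [coeff_zero_eq_constantCoeff]
  | succ n => rw [coeff_succ_X_mul, coeff_derivative]; push_cast; ring

theorem coeff_succ_of_ternary_ode [CommRing R] {f : R⟦X⟧}
    (hf : (4 * X - 27 * X ^ 2) * d⁄dX R (d⁄dX R f) + (6 - 54 * X) * d⁄dX R f - 6 * f = 0)
    (n : ℕ) :
    2 * (n + 1) * (2 * n + 3) * coeff (n + 1) f = 3 * (3 * n + 1) * (3 * n + 2) * coeff n f := by
  have hX2 : X ^ 2 * d⁄dX R (d⁄dX R f) = X * d⁄dX R (X * d⁄dX R f) - X * d⁄dX R f := by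
    rw [Derivation.leibniz, derivative_X, smul_eq_mul, smul_eq_mul]; ring
  have hC : C (4 : R) * (X * d⁄dX R (d⁄dX R f)) - C 27 * (X * d⁄dX R (X * d⁄dX R f))
      + C 27 * (X * d⁄dX R f) + C 6 * d⁄dX R f - C 54 * (X * d⁄dX R f) - C 6 * f = 0 := by
    simp only [map_ofNat]
    linear_combination hf + 27 * hX2
  have hn := congrArg (coeff n) hC
  simp only [map_sub, map_add, coeff_C_mul, coeff_X_mul_derivative, coeff_derivative,
    map_zero] at hn
  linear_combination hn

theorem isUnit_one_sub_X_mul [CommRing R] (f : R⟦X⟧) : IsUnit (1 - X * f) := by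
  simp [isUnit_iff_constantCoeff]

section Ternary

variable [CommRing R] {t : R⟦X⟧}

theorem derivative_mul_one_sub_of_eq_one_add_X_mul_pow_three (ht : t = 1 + X * t ^ 3) :
    d⁄dX R t * (1 - X * (3 * t ^ 2)) = t ^ 3 := by
  have h := congrArg (d⁄dX R) ht
  rw [map_add, derivative_one, zero_add, Derivation.leibniz, derivative_pow, derivative_X,
    smul_eq_mul, smul_eq_mul] at h
  push_cast at h
  linear_combination h

theorem derivative_derivative_mul_one_sub_of_eq_one_add_X_mul_pow_three
    (ht : t = 1 + X * t ^ 3) :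
    d⁄dX R (d⁄dX R t) * (1 - X * (3 * t ^ 2))
      = 6 * t ^ 2 * d⁄dX R t + 6 * X * t * d⁄dX R t ^ 2 := by
  have h := congrArg (d⁄dX R) (derivative_mul_one_sub_of_eq_one_add_X_mul_pow_three ht)
  have h3 : d⁄dX R (3 : R⟦X⟧) = 0 := by rw [← map_ofNat C, derivative_C]
  simp only [Derivation.leibniz, derivative_pow, map_sub, derivative_one, derivative_X, h3,
    smul_eq_mul] at h
  push_cast at h
  linear_combination h

theorem ternary_ode (ht : t = 1 + X * t ^ 3) :
    (4 * X - 27 * X ^ 2) * d⁄dX R (d⁄dX R t) + (6 - 54 * X) * d⁄dX R t - 6 * t = 0 := by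
  have h1 := derivative_mul_one_sub_of_eq_one_add_X_mul_pow_three ht
  have h2 := derivative_derivative_mul_one_sub_of_eq_one_add_X_mul_pow_three ht
  set u := 1 - X * (3 * t ^ 2)
  set d := d⁄dX R t
  -- after clearing `u` with `h1` and `h2`, only the relation `(t - X t³)² = 1` is left
  have key : ((4 * X - 27 * X ^ 2) * d⁄dX R d + (6 - 54 * X) * d - 6 * t) * u ^ 3
      = 6 * t * ((t - X * t ^ 3) ^ 2 - 1) := by
    linear_combination (4 * X - 27 * X ^ 2) * u ^ 2 * h2
      + ((4 * X - 27 * X ^ 2) * (6 * t ^ 2 * u + 6 * X * t * (d * u + t ^ 3))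
        + (6 - 54 * X) * u ^ 2) * h1
  rw [show t - X * t ^ 3 = 1 by linear_combination ht, one_pow, sub_self, mul_zero] at key
  exact ((isUnit_one_sub_X_mul (3 * t ^ 2)).pow 3).mul_left_eq_zero.mp key

end Ternary

end PowerSeries

/-- Let `t ∈ ℚ⟦X⟧` satisfy `t = 1 + X·t³` (generating function of the ternary
numbers). Then for every `n`, `(2n+1)·[X^n]t = C(3n,n)`: the coefficients of `t` are the
ternary numbers `C(3n,n)/(2n+1)`, counting paths from `(0,0)` to `(n,0)` with step set
`{(1,1),(-1,-2)}`. -/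
theorem stmt_15 (t : PowerSeries ℚ)
    (ht : t = 1 + PowerSeries.X * t ^ 3) (n : ℕ) :
    ((2 * n + 1 : ℕ) : ℚ) * PowerSeries.coeff n t = ((3 * n).choose n : ℚ) := by
  have hrec := coeff_succ_of_ternary_ode (ternary_ode ht)
  induction n with
  | zero => rw [ht]; simp
  | succ n ih =>
    have hchoose : (2 * (n + 1) * (2 * n + 1) * (3 * (n + 1)).choose (n + 1) : ℚ)
        = 3 * (3 * n + 1) * (3 * n + 2) * (3 * n).choose n := by
      exact_mod_cast Nat.mul_choose_three_mul_succ n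
    apply mul_left_cancel₀ (show (2 * (n + 1) * (2 * n + 1) : ℚ) ≠ 0 by positivity)
    push_cast at ih ⊢
    linear_combination (2 * n + 1) * hrec n + 3 * (3 * n + 1) * (3 * n + 2) * ih - hchoose
end

section
/- Let c ∈ ℚ⟦X⟧ be the Catalan generating function, the unique power series with c = 1 + X·c², and let a(n) = [X^n] (c · (2 - c²)⁻¹) denote the coefficients of the row-sum generating function of the Riordan array (c, c² - 1). Define b : ℕ → ℚ by b(0) = 1, b(1) = 4, and b(n+2) = 4·b(n+1) - b(n) (so b has generating function 1/(1-4x+x²)). Then for every n ≥ 0, the Hankel determinant det( (a(i+j))_{0 ≤ i,j ≤ n} ) equals b(n). -/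
/-- The sequence with generating function `1/(1-4x+x²)`: `b 0 = 1`, `b 1 = 4`,
`b (n+2) = 4·b (n+1) - b n` (OEIS A001353 shifted). -/
def hankelB : ℕ → ℚ
  | 0 => 1
  | 1 => 4
  | n + 2 => 4 * hankelB (n + 1) - hankelB n

/-!
Write `c = 1 + w`, so that `w = X (1 + w)²` and `A := c (2 - c²)⁻¹ = (1 + w) / (1 - 2w - w²)`.
The Riordan array `G i k = [X^i] A wᵏ` is lower unitriangular. Since `w / X = (1 + w)²` and
`(A - 1) / X = A (3 + 4w + w²)`, its rows, read as polynomials `rᵢ = ∑ₖ G i k tᵏ`, satisfy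
`rᵢ₊₁ = P rᵢ` for a fixed linear map `P` (`rowStep`, the production matrix). `P` is
self-adjoint for the bilinear form `B` (`jacobiForm`) whose Gram matrix is
`J = 1 ⊕ tridiag(1, 4, 1)`, so `B(rᵢ, rⱼ) = B(rᵢ₊ⱼ, 1) = [X^(i+j)] A`. That is, the Hankel
matrix factors as `G J Gᵀ`, so its determinant is `det J`, which obeys the continuant
recurrence `b (n+2) = 4 b (n+1) - b n`.
-/

open Matrix

theorem Matrix.det_tridiagonal_succ_succ {R : Type*} [CommRing R] (M : ℕ → ℕ → R)
    (hup : ∀ i j, i + 1 < j → M i j = 0) (hlow : ∀ i j, j + 1 < i → M i j = 0) (n : ℕ) :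
    det (of fun i j : Fin (n + 2) => M i j)
      = M (n + 1) (n + 1) * det (of fun i j : Fin (n + 1) => M i j)
        - M n (n + 1) * M (n + 1) n * det (of fun i j : Fin n => M i j) := by
  have hsub {m : ℕ} (f g : Fin m → Fin (n + 2)) (hf : ∀ i, (f i : ℕ) = i)
      (hg : ∀ j, (g j : ℕ) = j) :
      (of fun i j : Fin (n + 2) => M i j).submatrix f g = of fun i j : Fin m => M i j := by
    ext i j
    simp [hf, hg]
  rw [det_succ_row _ (Fin.last _), Fin.sum_univ_castSucc, Fin.sum_univ_castSucc,
    Finset.sum_eq_zero fun j _ => by simp [hlow _ _ (by simp : (j : ℕ) + 1 < n + 1)],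
    det_succ_column _ (Fin.last _), Fin.sum_univ_castSucc,
    Finset.sum_eq_zero fun i _ => by
      simp [Fin.succAbove, hup _ _ (by simp : (i : ℕ) + 1 < n + 1)]]
  simp only [Nat.succ_eq_add_one, Fin.val_last, Fin.val_castSucc, odd_add_one_self,
    Odd.neg_one_pow, of_apply, neg_mul, one_mul, Even.add_self, Even.neg_pow, one_pow,
    Fin.succAbove_last, submatrix_apply, Fin.succAbove, lt_self_iff_false, ↓reduceIte,
    Fin.succ_last, submatrix_submatrix, zero_add]
  rw [hsub Fin.castSucc Fin.castSucc (fun _ => rfl) (fun _ => rfl),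
    hsub (Fin.castSucc ∘ Fin.castSucc) _ (fun _ => rfl)
      (fun j => by simp [Fin.succAbove, Fin.lt_def])]
  ring

namespace LinearMap.IsAdjointPair

variable {R M N : Type*} [CommSemiring R] [AddCommMonoid M] [Module R M] [AddCommMonoid N]
  [Module R N] {B : M →ₗ[R] M →ₗ[R] N}

theorem pow {f g : Module.End R M} (h : IsAdjointPair B B f g) (n : ℕ) :
    IsAdjointPair B B ⇑(f ^ n) ⇑(g ^ n) := by
  induction n with
  | zero => simpa using isAdjointPair_one
  | succ n ih => rw [pow_succ, pow_succ']; exact ih.mul h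

theorem apply_pow_apply_pow {f : Module.End R M} (h : IsAdjointPair B B f f) (x : M) (i j : ℕ) :
    B ((f ^ i) x) ((f ^ j) x) = B ((f ^ (i + j)) x) x := by
  rw [← h.pow j, ← Module.End.mul_apply, ← pow_add, add_comm]

end LinearMap.IsAdjointPair

namespace Polynomial

variable {R : Type*} [CommSemiring R]

noncomputable def matrixBilinForm (M : ℕ → ℕ → R) : LinearMap.BilinForm R R[X] :=
  lsum fun k => LinearMap.smulRight LinearMap.id (lsum fun l => M k l • LinearMap.id)

theorem matrixBilinForm_monomial_X_pow (M : ℕ → ℕ → R) (k l : ℕ) (a : R) :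
    matrixBilinForm M (monomial k a) (X ^ l) = a * M k l := by
  simp [matrixBilinForm, ← monomial_one_right_eq_X_pow]

theorem matrixBilinForm_eq_sum_range (M : ℕ → ℕ → R) {p q : R[X]} {N : ℕ}
    (hp : p.natDegree < N) (hq : q.natDegree < N) :
    matrixBilinForm M p q
      = ∑ l ∈ Finset.range N, (∑ k ∈ Finset.range N, p.coeff k * M k l) * q.coeff l := by
  rw [matrixBilinForm, lsum_apply, sum_over_range' _ (by simp) N hp, LinearMap.sum_apply]
  simp only [LinearMap.coe_smulRight, LinearMap.id_coe, id_eq, LinearMap.smul_apply, lsum_apply,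
    smul_eq_mul, sum_over_range' _ (fun _ => mul_zero _) N hq, Finset.mul_sum, Finset.sum_mul,
    mul_assoc]
  rw [Finset.sum_comm]

end Polynomial

namespace CatalanHankel

section JacobiForm

open Polynomial

variable {R : Type*} [CommRing R]

def jacobi : ℕ → ℕ → R
  | 0, 0 => 1
  | k + 1, l + 1 => if k = l then 4 else if k = l + 1 ∨ l = k + 1 then 1 else 0
  | _, _ => 0

theorem jacobi_eq_zero {k l : ℕ} (h : k + 1 < l ∨ l + 1 < k) : (jacobi k l : R) = 0 := by
  unfold jacobi
  split <;> first | omega | rfl | (split_ifs <;> first | omega | rfl)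

theorem det_jacobi : ∀ n : ℕ, det (of fun i j : Fin (n + 1) => (jacobi i j : ℚ)) = hankelB n
  | 0 => by simp [jacobi, hankelB]
  | 1 => by
    rw [det_tridiagonal_succ_succ _ (fun _ _ h => jacobi_eq_zero (.inl h))
      (fun _ _ h => jacobi_eq_zero (.inr h))]
    simp [jacobi, hankelB]
  | n + 2 => by
    rw [det_tridiagonal_succ_succ _ (fun _ _ h => jacobi_eq_zero (.inl h))
      (fun _ _ h => jacobi_eq_zero (.inr h)), det_jacobi (n + 1), det_jacobi n]
    simp [jacobi, hankelB]

noncomputable abbrev jacobiForm : LinearMap.BilinForm R R[X] := matrixBilinForm jacobi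

theorem jacobiForm_one (p : R[X]) : jacobiForm p 1 = p.coeff 0 := by
  induction p using Polynomial.induction_on' with
  | add p q hp hq => simp [hp, hq]
  | monomial k a =>
    rw [← pow_zero X, matrixBilinForm_monomial_X_pow, coeff_monomial]
    rcases k with _ | k <;> simp [jacobi]

theorem jacobiForm_X (p : R[X]) : jacobiForm p X = 4 * p.coeff 1 + p.coeff 2 := by
  induction p using Polynomial.induction_on' with
  | add p q hp hq => simp only [map_add, LinearMap.add_apply, hp, hq, coeff_add]; ring
  | monomial k a =>
    rw [← pow_one X, matrixBilinForm_monomial_X_pow, coeff_monomial, coeff_monomial]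
    rcases k with _ | _ | _ | k <;> simp [jacobi, mul_comm]

theorem jacobiForm_X_pow_add_two (p : R[X]) (l : ℕ) :
    jacobiForm p (X ^ (l + 2)) = p.coeff (l + 1) + 4 * p.coeff (l + 2) + p.coeff (l + 3) := by
  induction p using Polynomial.induction_on' with
  | add p q hp hq => simp only [map_add, LinearMap.add_apply, hp, hq, coeff_add]; ring
  | monomial k a =>
    rw [matrixBilinForm_monomial_X_pow]
    simp only [coeff_monomial]
    rcases k with _ | k
    · simp [jacobi]
    · simp only [jacobi]
      split_ifs <;> first | omega | simp [mul_comm]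

/-- Right multiplication of a row vector, written as a polynomial, by the production matrix of
`G`: the matrix whose column `0` is `3 + 4t + t²` and whose column `k + 1` is `tᵏ (1 + t)²`. -/
noncomputable def rowStep : R[X] →ₗ[R] R[X] where
  toFun p := (X + 2) * p + divX p + C (p.coeff 0 + 3 * p.coeff 1 + p.coeff 2)
  map_add' p q := by simp only [divX_add, coeff_add, map_add, map_mul]; ring
  map_smul' a p := by
    simp only [smul_eq_C_mul, divX_C_mul, mul_coeff_zero, coeff_C_zero, coeff_C_mul, map_add,
      map_mul, RingHom.id_apply]
    ring

theorem rowStep_apply (p : R[X]) :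
    rowStep p = (X + 2) * p + divX p + C (p.coeff 0 + 3 * p.coeff 1 + p.coeff 2) := rfl

theorem coeff_rowStep_zero (p : R[X]) :
    (rowStep p).coeff 0 = 3 * p.coeff 0 + 4 * p.coeff 1 + p.coeff 2 := by
  simp only [rowStep_apply, coeff_add, mul_coeff_zero, coeff_X_zero, coeff_ofNat_zero, coeff_divX,
    coeff_C_zero]
  ring

theorem coeff_rowStep_succ (p : R[X]) (k : ℕ) :
    (rowStep p).coeff (k + 1) = p.coeff k + 2 * p.coeff (k + 1) + p.coeff (k + 2) := by
  simp [rowStep_apply, coeff_divX, add_mul, coeff_X_mul]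

theorem rowStep_one : rowStep (1 : R[X]) = X + (3 : R) • 1 := by
  ext (_ | k) <;> simp [coeff_rowStep_zero, coeff_rowStep_succ, coeff_one, coeff_X]

theorem rowStep_X : rowStep (X : R[X]) = X ^ 2 + (2 : R) • X + (4 : R) • 1 := by
  ext (_ | k) <;>
    simp [coeff_rowStep_zero, coeff_rowStep_succ, coeff_one, coeff_X, coeff_X_pow, eq_comm]

theorem rowStep_X_sq : rowStep (X ^ 2 : R[X]) = X ^ 3 + (2 : R) • X ^ 2 + X + 1 := by
  ext (_ | k) <;> simp [coeff_rowStep_zero, coeff_rowStep_succ, coeff_one, coeff_X, coeff_X_pow]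

theorem rowStep_X_pow_add_three (l : ℕ) :
    rowStep (X ^ (l + 3) : R[X]) = X ^ (l + 4) + (2 : R) • X ^ (l + 3) + X ^ (l + 2) := by
  ext (_ | k) <;> simp [coeff_rowStep_zero, coeff_rowStep_succ, coeff_X_pow]

theorem jacobiForm_rowStep_X_pow (p : R[X]) (l : ℕ) :
    jacobiForm (rowStep p) (X ^ l) = jacobiForm p (rowStep (X ^ l)) := by
  rcases l with _ | _ | _ | l
  · simp only [pow_zero, rowStep_one, map_add, map_smul, smul_eq_mul, jacobiForm_one,
      jacobiForm_X, coeff_rowStep_zero]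
    ring
  · simp only [zero_add, pow_one, rowStep_X, map_add, map_smul, smul_eq_mul, jacobiForm_one,
      jacobiForm_X, jacobiForm_X_pow_add_two, coeff_rowStep_succ]
    ring
  · simp only [zero_add, Nat.reduceAdd, rowStep_X_sq, map_add, map_smul, smul_eq_mul,
      jacobiForm_one, jacobiForm_X, jacobiForm_X_pow_add_two, coeff_rowStep_succ]
    ring
  · simp only [rowStep_X_pow_add_three, map_add, map_smul, smul_eq_mul, jacobiForm_X_pow_add_two,
      coeff_rowStep_succ]
    ring

theorem isAdjointPair_rowStep :
    LinearMap.IsAdjointPair (jacobiForm (R := R)) jacobiForm rowStep rowStep := by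
  intro p q
  induction q using Polynomial.induction_on' with
  | add q r hq hr => simp only [map_add, hq, hr]
  | monomial l b =>
    rw [← C_mul_X_pow_eq_monomial, ← smul_eq_C_mul, map_smul, map_smul, map_smul,
      jacobiForm_rowStep_X_pow]

end JacobiForm

section Riordan

open PowerSeries
open scoped Polynomial

variable {R : Type*} [CommRing R] {A w : R⟦X⟧}

theorem coeff_succ_mul_pow_succ (hw : w = X * (1 + w) ^ 2) (i k : ℕ) :
    coeff (i + 1) (A * w ^ (k + 1))
      = coeff i (A * w ^ k) + 2 * coeff i (A * w ^ (k + 1)) + coeff i (A * w ^ (k + 2)) := by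
  have h : A * w ^ (k + 1) = X * (A * w ^ k + 2 • (A * w ^ (k + 1)) + A * w ^ (k + 2)) := by
    linear_combination (A * w ^ k) * hw
  conv_lhs => rw [h]
  rw [coeff_succ_X_mul, map_add, map_add, map_nsmul, nsmul_eq_mul, Nat.cast_ofNat]

theorem coeff_succ_eq (hw : w = X * (1 + w) ^ 2) (hA : A * (1 - 2 * w - w ^ 2) = 1 + w)
    (i : ℕ) : coeff (i + 1) A = 3 * coeff i A + 4 * coeff i (A * w) + coeff i (A * w ^ 2) := by
  have h : A = 1 + X * (3 • A + 4 • (A * w) + A * w ^ 2) := by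
    linear_combination (1 - X * (1 + w)) * hA + (1 + 2 * A + A * w) * hw
  conv_lhs => rw [h]
  rw [map_add, coeff_one, if_neg i.succ_ne_zero, zero_add, coeff_succ_X_mul, map_add, map_add,
    map_nsmul, map_nsmul, nsmul_eq_mul, nsmul_eq_mul, Nat.cast_ofNat, Nat.cast_ofNat]

theorem coeff_mul_pow_of_lt (hw : w = X * (1 + w) ^ 2) {i k : ℕ} (h : i < k) :
    coeff i (A * w ^ k) = 0 := by
  have hX : X ^ k ∣ A * w ^ k :=
    Dvd.dvd.mul_left (pow_dvd_pow_of_dvd (hw ▸ dvd_mul_right X _) k) A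
  exact X_pow_dvd_iff.mp hX i h

theorem coeff_mul_pow_self (hw : w = X * (1 + w) ^ 2) (hA : A * (1 - 2 * w - w ^ 2) = 1 + w)
    (i : ℕ) : coeff i (A * w ^ i) = 1 := by
  have hw0 : constantCoeff w = 0 := by rw [hw]; simp
  have hA0 : constantCoeff A = 1 := by simpa [hw0] using congrArg constantCoeff hA
  have h : A * w ^ i = X ^ i * (A * (1 + w) ^ (2 * i)) := by
    conv_lhs => rw [hw, mul_pow, ← pow_mul]
    ring
  rw [h, coeff_X_pow_mul', if_pos le_rfl, Nat.sub_self, coeff_zero_eq_constantCoeff_apply]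
  simp [hA0, hw0]

theorem coeff_rowStep_pow_one (hw : w = X * (1 + w) ^ 2) (hA : A * (1 - 2 * w - w ^ 2) = 1 + w)
    (i k : ℕ) : ((rowStep ^ i) (1 : R[X])).coeff k = coeff i (A * w ^ k) := by
  induction i generalizing k with
  | zero =>
    rcases k with _ | k
    · simpa using (coeff_mul_pow_self hw hA 0).symm
    · simp [Polynomial.coeff_one, coeff_mul_pow_of_lt hw k.succ_pos]
  | succ i ih =>
    rw [pow_succ', Module.End.mul_apply]
    rcases k with _ | k
    · simp [coeff_rowStep_zero, ih, coeff_succ_eq hw hA]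
    · rw [coeff_rowStep_succ, ih, ih, ih, coeff_succ_mul_pow_succ hw]

theorem natDegree_rowStep_pow_one_le (hw : w = X * (1 + w) ^ 2)
    (hA : A * (1 - 2 * w - w ^ 2) = 1 + w) (i : ℕ) : ((rowStep ^ i) (1 : R[X])).natDegree ≤ i :=
  Polynomial.natDegree_le_iff_coeff_eq_zero.mpr fun _ h => by
    rw [coeff_rowStep_pow_one hw hA, coeff_mul_pow_of_lt hw h]

theorem hankel_eq_mul_jacobi_mul_transpose (hw : w = X * (1 + w) ^ 2)
    (hA : A * (1 - 2 * w - w ^ 2) = 1 + w) (N : ℕ) :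
    (of fun i j : Fin N => coeff (i.1 + j.1) A)
      = (of fun i k : Fin N => coeff i (A * w ^ k.1)) * (of fun k l : Fin N => jacobi k l)
        * (of fun i k : Fin N => coeff i (A * w ^ k.1))ᵀ := by
  ext i j
  set r : ℕ → R[X] := fun m => (rowStep ^ m) 1
  have hdeg (i : Fin N) : (r i).natDegree < N :=
    (natDegree_rowStep_pow_one_le hw hA i).trans_lt i.isLt
  calc coeff (i.1 + j.1) A = jacobiForm (r (i + j)) 1 := by
        rw [jacobiForm_one, coeff_rowStep_pow_one hw hA, pow_zero, mul_one]
    _ = jacobiForm (r i) (r j) := (isAdjointPair_rowStep.apply_pow_apply_pow 1 i j).symm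
    _ = _ := by
        rw [Polynomial.matrixBilinForm_eq_sum_range _ (hdeg i) (hdeg j)]
        simp only [Matrix.mul_apply, of_apply, transpose_apply, r, coeff_rowStep_pow_one hw hA,
          ← Fin.sum_univ_eq_sum_range (n := N)]

theorem det_hankel_eq_hankelB {A w : ℚ⟦X⟧} (hw : w = X * (1 + w) ^ 2)
    (hA : A * (1 - 2 * w - w ^ 2) = 1 + w) (n : ℕ) :
    det (of fun i j : Fin (n + 1) => coeff (i.1 + j.1) A) = hankelB n := by
  have hG : det (of fun i k : Fin (n + 1) => coeff i (A * w ^ k.1)) = 1 := by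
    rw [det_of_isLowerTriangular (of fun i k : Fin (n + 1) => coeff i (A * w ^ k.1))
      fun i k h => coeff_mul_pow_of_lt hw (show i.1 < k.1 from h)]
    exact Finset.prod_eq_one fun i _ => coeff_mul_pow_self hw hA i
  rw [hankel_eq_mul_jacobi_mul_transpose hw hA, det_mul, det_mul, det_transpose, hG, det_jacobi,
    one_mul, mul_one]

end Riordan

end CatalanHankel

/-- Let `c` be the Catalan series (`c = 1 + Xc²`) and let
`a(n) = [X^n](c·(2-c²)⁻¹)` be the row sums of the Riordan array `(c, c²-1)`. Then the Hankel
transform of `a` is the sequence `b` with `b(0)=1`, `b(1)=4`, `b(n+2)=4b(n+1)-b(n)`: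
for every `n`, `det((a(i+j))_{0≤i,j≤n}) = b(n)`. -/
theorem stmt_17 (c : PowerSeries ℚ)
    (hc : c = 1 + PowerSeries.X * c ^ 2) (n : ℕ) :
    Matrix.det (Matrix.of fun i j : Fin (n + 1) =>
      PowerSeries.coeff (R := ℚ) (i.1 + j.1) (c * (2 - c ^ 2)⁻¹)) = hankelB n := by
  obtain ⟨w, rfl⟩ : ∃ w, c = 1 + w := ⟨c - 1, by ring⟩
  have hw : w = PowerSeries.X * (1 + w) ^ 2 := by linear_combination hc
  have hw0 : PowerSeries.constantCoeff w = 0 := by rw [hw]; simp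
  refine CatalanHankel.det_hankel_eq_hankelB hw ?_ n
  rw [mul_assoc, show 1 - 2 * w - w ^ 2 = 2 - (1 + w) ^ 2 by ring,
    PowerSeries.inv_mul_cancel _ (by simp [hw0, map_ofNat]; norm_num), mul_one]
end

section
/- Let g ∈ ℚ⟦X⟧ be the power series satisfying g = 1 - X + X·g + X·g² (equivalently, g = (1 - x - √(1 - 6x + 5x²))/(2x)), and set g̃ = g·(1 - X)⁻¹. Then in the polynomial ring (ℚ⟦X⟧)[Y] one has the identity g̃·(Y - X·Y - X·Y² + X²·Y² - 1) = (Y - g̃)·(1 - X·Y·g). Equivalently, the generating function of the Riordan array (g̃, Xg) factors as g̃/(1 - yxg) = (1 - g̃/y)·1/(1 - x - xy + x²y - 1/y), exhibiting lattice paths with step set {(1,0), (1,1), (-1)·(2,1), (0,-1)} (where the (2,1) step carries weight -1). -/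
/-!
Since `g̃ (1 - X) = g`, the difference of the two sides is `Y (g - 1 - X g g̃)`. The functional
equation reads `(g - 1)(1 - X) = X g²`, and dividing by `1 - X` gives `g - 1 = X g g̃`.
-/

open Polynomial

theorem sub_one_eq_mul_mul_mul_inverse {A : Type*} [CommRing A] {x g u : A}
    (hu : (1 - x) * u = 1) (hg : g = 1 - x + x * g + x * g ^ 2) :
    g - 1 = x * g * (g * u) := by
  linear_combination (1 - g) * hu + u * hg

theorem C_mul_kernel_eq_mul {A : Type*} [CommRing A] {x g h : A}
    (hh : h * (1 - x) = g) (hg : g - 1 = x * g * h) :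
    C h * (X - C x * X - C x * X ^ 2 + C (x ^ 2) * X ^ 2 - 1)
      = (X - C h) * (1 - C x * X * C g) := by
  have hh' := congrArg C hh
  have hg' := congrArg C hg
  simp only [map_mul, map_sub, map_one] at hh' hg'
  simp only [map_pow]
  linear_combination (X - C x * X ^ 2) * hh' + X * hg'

/-- Let `g : ℚ⟦X⟧` satisfy `g = 1 - X + Xg + Xg²` and set `g̃ = g·(1-X)⁻¹`.
Then in `(ℚ⟦X⟧)[Y]` one has `g̃·(Y - XY - XY² + X²Y² - 1) = (Y - g̃)·(1 - XYg)`: the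
generating function of the Riordan array `(g̃, Xg)` factors as
`g̃/(1-yxg) = (1 - g̃/y)·1/(1 - x - xy + x²y - 1/y)`, exhibiting the step set
`{(1,0), (1,1), (-1)·(2,1), (0,-1)}`. -/
theorem stmt_19 (g : PowerSeries ℚ)
    (hg : g = 1 - PowerSeries.X + PowerSeries.X * g + PowerSeries.X * g ^ 2) :
    Polynomial.C (g * (1 - PowerSeries.X)⁻¹) * (Polynomial.X
        - Polynomial.C (PowerSeries.X : PowerSeries ℚ) * Polynomial.X
        - Polynomial.C (PowerSeries.X : PowerSeries ℚ) * Polynomial.X ^ 2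
        + Polynomial.C ((PowerSeries.X : PowerSeries ℚ) ^ 2) * Polynomial.X ^ 2 - 1)
    = (Polynomial.X - Polynomial.C (g * (1 - PowerSeries.X)⁻¹))
        * (1 - Polynomial.C (PowerSeries.X : PowerSeries ℚ) * Polynomial.X * Polynomial.C g) := by
  have hu : (1 - PowerSeries.X) * (1 - PowerSeries.X : PowerSeries ℚ)⁻¹ = 1 :=
    PowerSeries.mul_inv_cancel _ (by simp)
  refine C_mul_kernel_eq_mul ?_ (sub_one_eq_mul_mul_mul_inverse hu hg)
  rw [mul_assoc, mul_comm _ (1 - PowerSeries.X), hu, mul_one]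
end
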